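/- Let r > 0, c > 0 and α ∈ (0,1). If f : ℂ → ℂ is holomorphic on the strip S(r), bounded on S(r), and satisfies f( c·(log(1+n))^α ) = 0 for every integer n ≥ 0, then f is identically zero on S(r). -/

import Mathlib

/-!
Fix `z` and choose `s` with `|Im z| < s < r < 2s`. The map `w = exp (π z / (2s))` sends the strip
`|Im z| < s` onto the right half-plane and the zero `xₙ = c (log (1+n))^α` to
`tₙ = exp (π xₙ / (2s))`. Dividing `f` by the half-plane Blaschke factors `(w - tₘ)/(w + tₘ)`,
`m < n`, keeps it holomorphic on `S(r)` and, by Phragmén–Lindelöf (the factors have modulus one on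
the lines `|Im z| = s` and tend to modulus one as `|Re z| → ∞`), keeps its bound `M` on
`|Im z| ≤ s`. So `|f z| ≤ M ∏_{m<n} |(w - tₘ)/(w + tₘ)|`, where each factor is at most
`1 - Re w / (2 tₘ)` once `tₘ ≥ |w|`. Because `α < 1`, eventually `tₙ ≤ n + 1`, so `∑ 1/tₙ`
diverges (the Blaschke condition fails) and the product tends to zero.
-/

/-- The horizontal strip `S(r) = {z ∈ ℂ : |Im z| < r}`. -/
def strip (r : ℝ) : Set ℂ := {z : ℂ | |z.im| < r}

open Complex Set Filter Topology Finset
open scoped Real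

theorem norm_add_le_three_mul_norm_sub {E : Type*} [SeminormedAddCommGroup E] {u v : E}
    (h : 2 * ‖v‖ ≤ ‖u‖ ∨ 2 * ‖u‖ ≤ ‖v‖) : ‖u + v‖ ≤ 3 * ‖u - v‖ := by
  have h₁ := norm_add_le u v
  have h₂ := norm_sub_norm_le u v
  have h₃ := norm_sub_norm_le v u
  rw [norm_sub_rev v u] at h₃
  rcases h with h | h <;> linarith

theorem tendsto_prod_range_nhds_zero_of_not_summable {b : ℕ → ℝ} (h₀ : ∀ m, 0 ≤ b m)
    (h₁ : ∀ m, b m ≤ 1) (hb : ¬Summable fun m => 1 - b m) :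
    Tendsto (fun n => ∏ m ∈ range n, b m) atTop (𝓝 0) := by
  have hsum := (not_summable_iff_tendsto_nat_atTop_of_nonneg fun m => sub_nonneg.2 (h₁ m)).1 hb
  refine squeeze_zero (fun n => prod_nonneg fun m _ => h₀ m) (fun n => ?_)
    (Real.tendsto_exp_atBot.comp (tendsto_neg_atTop_atBot.comp hsum))
  calc ∏ m ∈ range n, b m ≤ ∏ m ∈ range n, Real.exp (-(1 - b m)) :=
        prod_le_prod (fun m _ => h₀ m) fun m _ => by linarith [Real.one_sub_le_exp_neg (1 - b m)]
    _ = Real.exp (-∑ m ∈ range n, (1 - b m)) := by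
        rw [← Real.exp_sum, sum_neg_distrib]

theorem exists_eq_mul_of_eq_zero {U : Set ℂ} {g h : ℂ → ℂ} {a : ℂ} (hU : IsOpen U) (ha : a ∈ U)
    (hg : DifferentiableOn ℂ g U) (hh : DifferentiableOn ℂ h U) (hga : g a = 0) (hha : h a = 0)
    (hh' : deriv h a ≠ 0) (hne : ∀ z ∈ U, z ≠ a → h z ≠ 0) :
    ∃ q : ℂ → ℂ, DifferentiableOn ℂ q U ∧ ∀ z ∈ U, g z = q z * h z := by
  have hdslope_ne : ∀ z ∈ U, dslope h a z ≠ 0 := by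
    intro z hz
    rcases eq_or_ne z a with rfl | hza
    · rwa [dslope_same]
    · rw [dslope_of_ne _ hza, slope_def_field, hha, sub_zero]
      exact div_ne_zero (hne z hz hza) (sub_ne_zero.2 hza)
  have hnhds := hU.mem_nhds ha
  refine ⟨fun z => dslope g a z / dslope h a z,
    ((differentiableOn_dslope hnhds).2 hg).div ((differentiableOn_dslope hnhds).2 hh) hdslope_ne,
    fun z hz => ?_⟩
  have hg_eq := sub_smul_dslope g a z
  have hh_eq := sub_smul_dslope h a z
  rw [hga, sub_zero, smul_eq_mul] at hg_eq
  rw [hha, sub_zero, smul_eq_mul] at hh_eq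
  rw [← hg_eq, ← hh_eq]
  field_simp [hdslope_ne z hz]

theorem sq_norm_add_ofReal_sub_sq_norm_sub_ofReal (w : ℂ) (t : ℝ) :
    ‖w + t‖ ^ 2 - ‖w - t‖ ^ 2 = 4 * t * w.re := by
  simp only [Complex.sq_norm, normSq_apply, add_re, add_im, sub_re, sub_im, ofReal_re, ofReal_im]
  ring

theorem norm_sub_ofReal_le_norm_add_ofReal {w : ℂ} (hw : 0 ≤ w.re) {t : ℝ} (ht : 0 ≤ t) :
    ‖w - t‖ ≤ ‖w + t‖ := by
  have := sq_norm_add_ofReal_sub_sq_norm_sub_ofReal w t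
  exact (pow_le_pow_iff_left₀ (norm_nonneg _) (norm_nonneg _) two_ne_zero).1 (by nlinarith)

theorem norm_sub_ofReal_eq_norm_add_ofReal {w : ℂ} (hw : w.re = 0) (t : ℝ) :
    ‖w - t‖ = ‖w + t‖ := by
  have := sq_norm_add_ofReal_sub_sq_norm_sub_ofReal w t
  rw [hw, mul_zero, sub_eq_zero] at this
  exact ((pow_left_inj₀ (norm_nonneg _) (norm_nonneg _) two_ne_zero).1 this).symm

theorem norm_sub_ofReal_div_add_ofReal_le {w : ℂ} (hw : 0 < w.re) {t : ℝ} (hwt : ‖w‖ ≤ t) :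
    ‖(w - t) / (w + t)‖ ≤ 1 - w.re / (2 * t) := by
  have hdiff := sq_norm_add_ofReal_sub_sq_norm_sub_ofReal w t
  have ht : 0 < t := (norm_pos_iff.2 fun h => by simp [h] at hw).trans_le hwt
  have hD_ge : w.re + t ≤ ‖w + t‖ := by simpa using re_le_norm (w + t)
  have hD_le : ‖w + t‖ ≤ 2 * t := by
    have := norm_add_le w (t : ℂ); rw [norm_real, Real.norm_of_nonneg ht.le] at this; linarith
  have hA := norm_sub_ofReal_le_norm_add_ofReal hw.le ht.le
  have hkey : 2 * t * w.re ≤ (‖w + t‖ - ‖w - t‖) * ‖w + t‖ := by nlinarith [norm_nonneg (w - t)]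
  have hgap : w.re * ‖w + t‖ / (2 * t) ≤ ‖w + t‖ - ‖w - t‖ := by
    rw [div_le_iff₀ (by linarith)]; nlinarith
  rw [norm_div, div_le_iff₀ (by linarith), sub_mul, one_mul, div_mul_eq_mul_div]
  linarith

theorem isOpen_strip (r : ℝ) : IsOpen (strip r) :=
  isOpen_lt (continuous_abs.comp continuous_im) continuous_const

/-- `stripExp s` maps the strip `|Im z| < s` onto the right half-plane, and `stripBlaschke s a` is
the pull-back of the half-plane Blaschke factor `(w - t) / (w + t)` with zero `t = stripExp s a`. -/
noncomputable def stripExp (s : ℝ) (z : ℂ) : ℂ := exp (↑(π / (2 * s)) * z)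

noncomputable def stripBlaschke (s a : ℝ) (z : ℂ) : ℂ :=
  (stripExp s z - stripExp s a) / (stripExp s z + stripExp s a)

section
variable {s : ℝ}

theorem pi_div_two_mul_self (hs : s ≠ 0) : π / (2 * s) * s = π / 2 := by
  field_simp

theorem stripExp_ofReal (s a : ℝ) : stripExp s a = Real.exp (π / (2 * s) * a) := by
  simp only [stripExp, ← ofReal_mul, ofReal_exp]

theorem norm_stripExp (s : ℝ) (z : ℂ) : ‖stripExp s z‖ = Real.exp (π / (2 * s) * z.re) := by
  rw [stripExp, norm_exp, re_ofReal_mul]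

theorem re_stripExp (s : ℝ) (z : ℂ) :
    (stripExp s z).re = Real.exp (π / (2 * s) * z.re) * Real.cos (π / (2 * s) * z.im) := by
  rw [stripExp, exp_re, re_ofReal_mul, im_ofReal_mul]

theorem abs_im_pi_div_two_mul_lt_pi (hs : 0 < s) {z : ℂ} (hz : |z.im| < 2 * s) :
    |(↑(π / (2 * s)) * z).im| < π := by
  rw [im_ofReal_mul, abs_mul, abs_of_pos (by positivity)]
  calc π / (2 * s) * |z.im| < π / (2 * s) * (2 * s) := by gcongr
    _ = π := by field_simp

theorem re_stripExp_nonneg (hs : 0 < s) {z : ℂ} (hz : |z.im| ≤ s) : 0 ≤ (stripExp s z).re := by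
  rw [re_stripExp]
  refine mul_nonneg (Real.exp_nonneg _) (Real.cos_nonneg_of_mem_Icc (abs_le.1 ?_))
  rw [abs_mul, abs_of_pos (by positivity), ← pi_div_two_mul_self hs.ne']
  gcongr

theorem re_stripExp_pos (hs : 0 < s) {z : ℂ} (hz : |z.im| < s) : 0 < (stripExp s z).re := by
  rw [re_stripExp]
  refine mul_pos (Real.exp_pos _) (Real.cos_pos_of_mem_Ioo (abs_lt.1 ?_))
  rw [abs_mul, abs_of_pos (by positivity), ← pi_div_two_mul_self hs.ne']
  gcongr

theorem re_stripExp_eq_zero (hs : 0 < s) {z : ℂ} (hz : |z.im| = s) : (stripExp s z).re = 0 := by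
  rw [re_stripExp, ← Real.cos_abs, abs_mul, abs_of_pos (by positivity), hz,
    pi_div_two_mul_self hs.ne', Real.cos_pi_div_two, mul_zero]

theorem stripExp_eq_stripExp_ofReal_iff (hs : 0 < s) {z : ℂ} (hz : |z.im| < 2 * s) (a : ℝ) :
    stripExp s z = stripExp s a ↔ z = a := by
  refine ⟨fun h => ?_, fun h => h ▸ rfl⟩
  have hlt := abs_lt.1 (abs_im_pi_div_two_mul_lt_pi hs hz)
  have hk : (↑(π / (2 * s)) : ℂ) ≠ 0 := ofReal_ne_zero.2 (by positivity)
  have := congrArg log h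
  rw [stripExp, stripExp, ← ofReal_mul, log_exp hlt.1 hlt.2.le,
    log_exp (by rw [ofReal_im]; linarith [Real.pi_pos]) (by rw [ofReal_im]; linarith [Real.pi_pos]),
    ofReal_mul] at this
  exact mul_left_cancel₀ hk this

theorem stripExp_add_stripExp_ofReal_ne_zero (hs : 0 < s) {z : ℂ} (hz : |z.im| < 2 * s) (a : ℝ) :
    stripExp s z + stripExp s a ≠ 0 := by
  intro h
  have hlt := abs_lt.1 (abs_im_pi_div_two_mul_lt_pi hs hz)
  have hexp : stripExp s z = exp (↑(π / (2 * s) * a) + π * I) := by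
    rw [exp_add, exp_pi_mul_I, eq_neg_of_add_eq_zero_left h, stripExp, ofReal_mul]; ring
  have him : (↑(π / (2 * s) * a) + π * I).im = π := by
    rw [add_im, ofReal_im, im_ofReal_mul, I_im, mul_one, zero_add]
  have := congrArg log hexp
  rw [stripExp, log_exp hlt.1 hlt.2.le, log_exp (by linarith [Real.pi_pos]) him.le] at this
  linarith [congrArg im this]

theorem exists_eq_mul_stripBlaschke {r : ℝ} (hr : 0 < r) (hrs : r ≤ 2 * s) {g : ℂ → ℂ}
    (hg : DifferentiableOn ℂ g (strip r)) {a : ℝ} (hga : g a = 0) :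
    ∃ q : ℂ → ℂ, DifferentiableOn ℂ q (strip r) ∧
      ∀ z ∈ strip r, g z = q z * stripBlaschke s a z := by
  have hs : 0 < s := by linarith
  have hsub : strip r ⊆ {z : ℂ | |z.im| < 2 * s} := fun z hz => lt_of_lt_of_le hz hrs
  have hE : Differentiable ℂ (stripExp s) := (differentiable_id.const_mul _).cexp
  have hderiv : HasDerivAt (fun z => stripExp s z - stripExp s a)
      (stripExp s a * ↑(π / (2 * s))) a := by
    simpa [stripExp] using
      (((hasDerivAt_id (a : ℂ)).const_mul (↑(π / (2 * s)) : ℂ)).cexp).sub_const (stripExp s a)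
  obtain ⟨q, hq, hgq⟩ := exists_eq_mul_of_eq_zero (isOpen_strip r) (by simpa [strip] using hr) hg
    (hE.differentiableOn.sub_const _) hga (sub_self _)
    (by rw [hderiv.deriv]; exact mul_ne_zero (exp_ne_zero _) (ofReal_ne_zero.2 (by positivity)))
    fun z hz hza => sub_ne_zero.2 (mt (stripExp_eq_stripExp_ofReal_iff hs (hsub hz) a).1 hza)
  refine ⟨fun z => q z * (stripExp s z + stripExp s a),
    hq.mul (hE.differentiableOn.add_const _), fun z hz => ?_⟩
  rw [hgq z hz, stripBlaschke, mul_assoc, mul_div_cancel₀ _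
    (stripExp_add_stripExp_ofReal_ne_zero hs (hsub hz) a)]

theorem norm_stripBlaschke_le_one (hs : 0 < s) {z : ℂ} (hz : |z.im| ≤ s) (a : ℝ) :
    ‖stripBlaschke s a z‖ ≤ 1 := by
  rw [stripBlaschke, norm_div, stripExp_ofReal]
  exact div_le_one_of_le₀ (norm_sub_ofReal_le_norm_add_ofReal (re_stripExp_nonneg hs hz)
    (Real.exp_pos _).le) (norm_nonneg _)

theorem norm_stripBlaschke_eq_one (hs : 0 < s) {z : ℂ} (hz : |z.im| = s) (a : ℝ) :
    ‖stripBlaschke s a z‖ = 1 := by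
  have hne := stripExp_add_stripExp_ofReal_ne_zero hs (by linarith : |z.im| < 2 * s) a
  rw [stripBlaschke, norm_div, div_eq_one_iff_eq (norm_ne_zero_iff.2 hne), stripExp_ofReal]
  exact norm_sub_ofReal_eq_norm_add_ofReal (re_stripExp_eq_zero hs hz) _

theorem eventually_norm_stripExp_add_le (hs : 0 < s) (a : ℝ) :
    ∀ᶠ z in comap (_root_.abs ∘ re) atTop,
      ‖stripExp s z + stripExp s a‖ ≤ 3 * ‖stripExp s z - stripExp s a‖ := by
  set k := π / (2 * s)
  have hk : 0 < k := by positivity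
  have htwo : ∀ u, 2 * Real.exp u = Real.exp (Real.log 2 + u) := fun u => by
    rw [Real.exp_add, Real.exp_log two_pos]
  rw [eventually_comap]
  filter_upwards [eventually_ge_atTop (|a| + Real.log 2 / k)] with x hx z hz
  have hfar : k * |a| + Real.log 2 ≤ k * |z.re| := by
    have := mul_le_mul_of_nonneg_left (hz ▸ hx) hk.le
    rwa [mul_add, mul_div_cancel₀ _ hk.ne'] at this
  have hka := mul_le_mul_of_nonneg_left (le_abs_self a) hk.le
  have hka' := mul_le_mul_of_nonneg_left (neg_abs_le a) hk.le
  apply norm_add_le_three_mul_norm_sub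
  rw [norm_stripExp, norm_stripExp, ofReal_re, htwo, htwo, Real.exp_le_exp, Real.exp_le_exp]
  rcases le_or_gt 0 z.re with hre | hre
  · rw [abs_of_nonneg hre] at hfar
    left; linarith
  · rw [abs_of_neg hre] at hfar
    right; linarith

theorem norm_le_of_eq_mul_stripBlaschke (hs : 0 < s) {g q : ℂ → ℂ} {M a : ℝ}
    (hq : DiffContOnCl ℂ q (im ⁻¹' Ioo (-s) s)) (hg : ∀ z : ℂ, |z.im| ≤ s → ‖g z‖ ≤ M)
    (hgq : ∀ z : ℂ, |z.im| ≤ s → g z = q z * stripBlaschke s a z) {z : ℂ} (hz : |z.im| ≤ s) :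
    ‖q z‖ ≤ M := by
  have hbdry : ∀ z : ℂ, |z.im| = s → ‖q z‖ ≤ M := fun z hz => by
    simpa [hgq z hz.le, norm_stripBlaschke_eq_one hs hz] using hg z hz.le
  have hfar : q =O[comap (_root_.abs ∘ re) atTop ⊓ 𝓟 (im ⁻¹' Ioo (-s) s)] fun _ => (1 : ℝ) := by
    refine Asymptotics.IsBigO.of_bound (3 * M) ?_
    filter_upwards [(eventually_norm_stripExp_add_le hs a).filter_mono inf_le_left,
      mem_inf_of_right (mem_principal_self _)] with z hfar hz
    have hz' : |z.im| ≤ s := abs_le.2 ⟨hz.1.le, hz.2.le⟩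
    have hD := norm_pos_iff.2 (stripExp_add_stripExp_ofReal_ne_zero hs (by linarith) a)
    have hgz := hg z hz'
    rw [hgq z hz', norm_mul, stripBlaschke, norm_div, mul_div_assoc', div_le_iff₀ hD] at hgz
    rw [norm_one, mul_one]
    refine le_of_mul_le_mul_right ?_ hD
    nlinarith [norm_nonneg (q z)]
  refine PhragmenLindelof.horizontal_strip hq ⟨0, by rw [sub_neg_eq_add]; positivity, 0, ?_⟩
    (fun z hz => hbdry z (by rw [hz, abs_neg, abs_of_pos hs]))
    (fun z hz => hbdry z (by rw [hz, abs_of_pos hs])) (abs_le.1 hz).1 (abs_le.1 hz).2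
  simpa using hfar

theorem stripBlaschke_ne_zero (hs : 0 < s) {z : ℂ} (hz : |z.im| < 2 * s) {a : ℝ} (hza : z ≠ a) :
    stripBlaschke s a z ≠ 0 :=
  div_ne_zero (sub_ne_zero.2 (mt (stripExp_eq_stripExp_ofReal_iff hs hz a).1 hza))
    (stripExp_add_stripExp_ofReal_ne_zero hs hz a)

theorem exists_eq_mul_prod_stripBlaschke {r M : ℝ} (hsr : s < r) (hrs : r ≤ 2 * s) {f : ℂ → ℂ}
    (hf : DifferentiableOn ℂ f (strip r)) (hM : ∀ z : ℂ, |z.im| ≤ s → ‖f z‖ ≤ M) {a : ℕ → ℝ}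
    (ha : Function.Injective a) (hfa : ∀ m, f (a m) = 0) (n : ℕ) :
    ∃ g : ℂ → ℂ, DifferentiableOn ℂ g (strip r) ∧
      (∀ z ∈ strip r, f z = g z * ∏ m ∈ range n, stripBlaschke s (a m) z) ∧
      ∀ z : ℂ, |z.im| ≤ s → ‖g z‖ ≤ M := by
  have hs : 0 < s := by linarith
  have hclosed : ∀ z : ℂ, |z.im| ≤ s → z ∈ strip r := fun z hz => lt_of_le_of_lt hz hsr
  have hreal : ∀ x : ℝ, |(x : ℂ).im| ≤ s := fun x => by simpa using hs.le
  have hcl : closure (im ⁻¹' Ioo (-s) s) ⊆ strip r := by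
    rw [closure_preimage_im, closure_Ioo (by linarith)]
    exact fun z hz => hclosed z (abs_le.2 hz)
  induction n with
  | zero => exact ⟨f, hf, fun z _ => by simp, hM⟩
  | succ n ih =>
    obtain ⟨g, hg, hfg, hgM⟩ := ih
    have hprod : ∏ m ∈ range n, stripBlaschke s (a m) (a n) ≠ 0 :=
      prod_ne_zero_iff.2 fun m hm => stripBlaschke_ne_zero hs (by linarith [hreal (a n)])
        fun h => (mem_range.1 hm).ne' (ha (ofReal_injective h))
    have hgn : g (a n) = 0 := by
      simpa [hfa n, hprod] using (hfg (a n) (hclosed _ (hreal _))).symm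
    obtain ⟨q, hq, hgq⟩ := exists_eq_mul_stripBlaschke (by linarith) hrs hg hgn
    refine ⟨q, hq, fun z hz => by rw [prod_range_succ, hfg z hz, hgq z hz]; ring, fun z hz => ?_⟩
    exact norm_le_of_eq_mul_stripBlaschke hs (hq.mono hcl).diffContOnCl hgM
      (fun z hz => hgq z (hclosed z hz)) hz

theorem tendsto_prod_norm_stripBlaschke (hs : 0 < s) {z : ℂ} (hz : |z.im| < s) {a : ℕ → ℝ}
    (ha : Tendsto a atTop atTop)
    (hsum : ¬Summable fun m => Real.exp (-(π / (2 * s) * a m))) :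
    Tendsto (fun n => ∏ m ∈ range n, ‖stripBlaschke s (a m) z‖) atTop (𝓝 0) := by
  have hw := re_stripExp_pos hs hz
  refine tendsto_prod_range_nhds_zero_of_not_summable (fun m => norm_nonneg _)
    (fun m => norm_stripBlaschke_le_one hs hz.le _) fun hsum' => hsum ?_
  refine (hsum'.mul_left (2 / (stripExp s z).re)).of_norm_bounded_eventually_nat ?_
  have ht : Tendsto (fun m => Real.exp (π / (2 * s) * a m)) atTop atTop :=
    Real.tendsto_exp_atTop.comp (ha.const_mul_atTop (by positivity))
  filter_upwards [ht.eventually_ge_atTop ‖stripExp s z‖] with m hm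
  have hB := norm_sub_ofReal_div_add_ofReal_le hw hm
  rw [stripBlaschke, stripExp_ofReal, Real.norm_of_nonneg (Real.exp_pos _).le, Real.exp_neg]
  calc (Real.exp (π / (2 * s) * a m))⁻¹
      = 2 / (stripExp s z).re * ((stripExp s z).re / (2 * Real.exp (π / (2 * s) * a m))) := by
        field_simp
    _ ≤ _ := by gcongr; linarith

end

theorem tendsto_log_one_add_natCast_atTop :
    Tendsto (fun n : ℕ => Real.log (1 + n)) atTop atTop :=
  Real.tendsto_log_atTop.comp (tendsto_atTop_add_const_left _ 1 tendsto_natCast_atTop_atTop)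

theorem not_summable_exp_neg_mul_log_one_add_rpow (K : ℝ) {α : ℝ} (hα : α < 1) :
    ¬Summable fun n : ℕ => Real.exp (-(K * Real.log (1 + n) ^ α)) := by
  have hL := tendsto_log_one_add_natCast_atTop
  have hdom : ∀ᶠ n : ℕ in atTop, K * Real.log (1 + n) ^ α ≤ Real.log (1 + n) := by
    filter_upwards [hL.eventually_gt_atTop 0,
      ((tendsto_rpow_atTop (sub_pos.2 hα)).comp hL).eventually_ge_atTop K] with n hpos hK
    calc K * Real.log (1 + n) ^ α ≤ Real.log (1 + n) ^ (1 - α) * Real.log (1 + n) ^ α :=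
          mul_le_mul_of_nonneg_right hK (Real.rpow_nonneg hpos.le _)
      _ = Real.log (1 + n) := by rw [← Real.rpow_add hpos, sub_add_cancel, Real.rpow_one]
  intro h
  refine Real.not_summable_one_div_natCast
    ((summable_nat_add_iff 1).1 (h.of_norm_bounded_eventually_nat ?_))
  filter_upwards [hdom] with n hn
  rw [Real.norm_of_nonneg (by positivity), Nat.cast_add_one, add_comm, one_div,
    ← Real.exp_log (by positivity : (0 : ℝ) < 1 + n), ← Real.exp_neg, Real.log_exp]
  exact Real.exp_le_exp.2 (neg_le_neg hn)

theorem stmt7 (r c α : ℝ) (hc : 0 < c) (hα : α ∈ Set.Ioo (0:ℝ) 1)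
    (f : ℂ → ℂ) (hf : DifferentiableOn ℂ f (strip r))
    (hb : ∃ M : ℝ, ∀ z ∈ strip r, ‖f z‖ ≤ M)
    (hzero : ∀ n : ℕ, f (((c * Real.log (1 + (n:ℝ)) ^ α : ℝ) : ℂ)) = 0) :
    ∀ z ∈ strip r, f z = 0 := by
  intro z hz
  obtain ⟨M, hM⟩ := hb
  have hr : 0 < r := (abs_nonneg _).trans_lt hz
  -- `s < r` keeps the closed strip `|Im z| ≤ s` inside `S(r)`; `r ≤ 2 s` keeps `stripExp s`
  -- injective on `S(r)`, so `stripBlaschke s a` has no pole and no zero but `a` in `S(r)`.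
  set s := (max |z.im| (r / 2) + r) / 2 with hs
  have hzs : |z.im| < s := by linarith [hs, le_max_left |z.im| (r / 2), show |z.im| < r from hz]
  have hsr : s < r := by linarith [hs, max_lt (show |z.im| < r from hz) (half_lt_self hr)]
  have hrs : r ≤ 2 * s := by linarith [hs, le_max_right |z.im| (r / 2)]
  set a : ℕ → ℝ := fun n => c * Real.log (1 + n) ^ α
  have ha_mono : StrictMono a := fun m n hmn =>
    mul_lt_mul_of_pos_left (Real.rpow_lt_rpow (Real.log_nonneg (by simp))
      (Real.log_lt_log (by positivity) (by simpa using hmn)) hα.1) hc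
  have ha_top : Tendsto a atTop atTop :=
    ((tendsto_rpow_atTop hα.1).comp tendsto_log_one_add_natCast_atTop).const_mul_atTop hc
  have hsum : ¬Summable fun m => Real.exp (-(π / (2 * s) * a m)) := by
    simpa only [a, mul_assoc] using
      not_summable_exp_neg_mul_log_one_add_rpow (π / (2 * s) * c) hα.2
  have hbound (n : ℕ) : ‖f z‖ ≤ M * ∏ m ∈ range n, ‖stripBlaschke s (a m) z‖ := by
    obtain ⟨g, -, hfg, hgM⟩ := exists_eq_mul_prod_stripBlaschke hsr hrs hf
      (fun z hz => hM z (lt_of_le_of_lt hz hsr)) ha_mono.injective hzero n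
    rw [hfg z hz, norm_mul, norm_prod]
    exact mul_le_mul_of_nonneg_right (hgM z hzs.le) (prod_nonneg fun _ _ => norm_nonneg _)
  have hlim := (tendsto_prod_norm_stripBlaschke (by linarith) hzs ha_top hsum).const_mul M
  rw [mul_zero] at hlim
  exact norm_le_zero_iff.1 (ge_of_tendsto' hlim hbound)
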